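/- On the positive half-line the pieces of K₊ and K₋ interlace in the following order: for every i ∈ ℤ, every x ∈ T₀^[i] '' (Q '' C₁), every y ∈ T₀^[i] '' C₁ and every z ∈ T₀^[i−1] '' (Q '' C₁) satisfy x < y < z. -/

import Mathlib

noncomputable section

/-- The affine contraction of ratio 1/100 fixing 0. -/
def T0 (x : ℝ) : ℝ := x / 100

/-- The affine contraction of ratio 1/100 fixing 1. -/
def T1 (x : ℝ) : ℝ := 1 + (x - 1) / 100

/-- The affine contraction of ratio 1/100 fixing -1. -/
def Tm1 (x : ℝ) : ℝ := -1 + (x + 1) / 100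

/-- The inverse of `T0`. -/
def T0inv (x : ℝ) : ℝ := 100 * x

/-- The `i`-th iterate of `T0` for `i ≥ 0`, and the `|i|`-th iterate of
`T0⁻¹ : x ↦ 100 x` for `i < 0`. -/
def T0z : ℤ → ℝ → ℝ
  | Int.ofNat n => T0^[n]
  | Int.negSucc n => T0inv^[n + 1]

/-- The set `K₊ = {0} ∪ ⋃ i ∈ ℤ, T₀^[i] '' (C₁ ∪ C₋₁)` where `C₁ = T₁ '' C`,
`C₋₁ = T₋₁ '' C`. -/
def Kplus (C : Set ℝ) : Set ℝ := {0} ∪ ⋃ i : ℤ, T0z i '' (T1 '' C ∪ Tm1 '' C)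

/-- The map `Q : x ↦ x/10`. -/
def Q (x : ℝ) : ℝ := x / 10

/-- The set `K₋ = Q '' K₊`. -/
def Kminus (C : Set ℝ) : Set ℝ := Q '' Kplus C

/-- The bijection `h` : `x ↦ x/10` for `x ≥ 0`, `x ↦ 10 x` for `x < 0`. -/
def hmap (x : ℝ) : ℝ := if 0 ≤ x then x / 10 else 10 * x

/-- The inverse of `h` : `y ↦ 10 y` for `y ≥ 0`, `y ↦ y/10` for `y < 0`. -/
def hmapInv (y : ℝ) : ℝ := if 0 ≤ y then 10 * y else y / 10

/-- The inverse of `T₋₁` : `x ↦ 100 x + 99`. -/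
def Tm1inv (x : ℝ) : ℝ := 100 * x + 99

/-!
Every map in the self-similarity equation sends `[-1, 1]` into itself and contracts, so the point
of the compact set `C` of largest absolute value lies in `[-1, 1]`, hence `C ⊆ [-1, 1]`. Then
`C₁ ⊆ [49/50, 1]`, `Q '' C₁ ⊆ [49/500, 1/10]` and `T₀^[i-1] = T₀^[i] ∘ (100 · ·)`, so after applying
the increasing map `T₀^[i] = (100 ^ (-i) * ·)` the three pieces are the disjoint, ordered
intervals `[49/500, 1/10]`, `[49/50, 1]` and `[49/5, 10]`, scaled.
-/

theorem T0_iterate_apply (n : ℕ) (x : ℝ) : T0^[n] x = x / 100 ^ n := by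
  induction n with
  | zero => simp
  | succ k ih =>
    rw [Function.iterate_succ_apply', ih, T0, pow_succ, div_div]

theorem T0inv_iterate_apply (n : ℕ) (x : ℝ) : T0inv^[n] x = 100 ^ n * x := by
  induction n with
  | zero => simp
  | succ k ih =>
    rw [Function.iterate_succ_apply', ih, T0inv, pow_succ', mul_assoc]

theorem T0z_apply (i : ℤ) (x : ℝ) : T0z i x = (100 : ℝ) ^ (-i) * x := by
  cases i with
  | ofNat n =>
    rw [T0z, T0_iterate_apply, Int.ofNat_eq_natCast, zpow_neg, zpow_natCast, div_eq_inv_mul]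
  | negSucc n =>
    rw [T0z, T0inv_iterate_apply, Int.neg_negSucc, zpow_natCast]

theorem T0z_sub_one_apply (i : ℤ) (x : ℝ) : T0z (i - 1) x = T0z i (100 * x) := by
  rw [T0z_apply, T0z_apply, neg_sub, sub_eq_neg_add, zpow_add_one₀ (by norm_num), mul_assoc]

theorem strictMono_T0z (i : ℤ) : StrictMono (T0z i) := fun x y hxy => by
  simpa only [T0z_apply] using mul_lt_mul_of_pos_left hxy (zpow_pos (by norm_num) (-i))

theorem norm_le_of_forall_exists_norm_le {E : Type*} [SeminormedAddCommGroup E] {C : Set E}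
    (hne : C.Nonempty) (hC : IsCompact C) {ρ R : ℝ} (hρ₀ : 0 ≤ ρ) (hρ₁ : ρ < 1)
    (h : ∀ c ∈ C, ∃ c' ∈ C, ‖c‖ ≤ ρ * ‖c'‖ + (1 - ρ) * R) : ∀ c ∈ C, ‖c‖ ≤ R := by
  obtain ⟨m, hm, hmax⟩ := hC.exists_isMaxOn hne continuous_norm.continuousOn
  obtain ⟨c', hc', hmc'⟩ := h m hm
  have hc'm : ‖c'‖ ≤ ‖m‖ := hmax hc'
  have hmR : ‖m‖ ≤ R := by nlinarith
  exact fun c hc => (hmax hc).trans hmR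

theorem abs_le_one_of_eq_image_union {C : Set ℝ} (hne : C.Nonempty) (hcomp : IsCompact C)
    (hself : C = Tm1 '' C ∪ T0 '' C ∪ T1 '' C) : ∀ c ∈ C, |c| ≤ 1 := by
  refine norm_le_of_forall_exists_norm_le (ρ := 1 / 100) hne hcomp (by norm_num) (by norm_num) ?_
  intro c hc
  rw [hself] at hc
  rcases hc with (⟨c', hc', rfl⟩ | ⟨c', hc', rfl⟩) | ⟨c', hc', rfl⟩ <;>
  · refine ⟨c', hc', ?_⟩
    simp only [Real.norm_eq_abs, Tm1, T0, T1]
    have := neg_abs_le c'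
    have := le_abs_self c'
    exact abs_le.mpr ⟨by linarith, by linarith⟩

theorem stmt_9 (C : Set ℝ) (hne : C.Nonempty) (hcomp : IsCompact C)
    (hself : C = Tm1 '' C ∪ T0 '' C ∪ T1 '' C) (i : ℤ) (x y z : ℝ)
    (hx : x ∈ T0z i '' (Q '' (T1 '' C)))
    (hy : y ∈ T0z i '' (T1 '' C))
    (hz : z ∈ T0z (i - 1) '' (Q '' (T1 '' C))) :
    x < y ∧ y < z := by
  have hC := abs_le_one_of_eq_image_union hne hcomp hself
  obtain ⟨-, ⟨-, ⟨a, ha, rfl⟩, rfl⟩, rfl⟩ := hx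
  obtain ⟨-, ⟨b, hb, rfl⟩, rfl⟩ := hy
  obtain ⟨-, ⟨-, ⟨c, hc, rfl⟩, rfl⟩, rfl⟩ := hz
  obtain ⟨ha₁, ha₂⟩ := abs_le.mp (hC a ha)
  obtain ⟨hb₁, hb₂⟩ := abs_le.mp (hC b hb)
  obtain ⟨hc₁, hc₂⟩ := abs_le.mp (hC c hc)
  rw [T0z_sub_one_apply]
  constructor <;> apply strictMono_T0z <;> simp only [Q, T1] <;> linarith
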